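/- arXiv:2102.04611 — 2 statements merged into one kernel-verified Lean document; each statement's English description precedes it below -/
import Mathlib

section
/- Let k ≥ 1 and let 0 < λ_1 ≤ λ_2 ≤ ⋯ ≤ λ_k < λ_{k+1} be real numbers satisfying Yang's first inequality ∑_{i=1}^k (λ_{k+1} − λ_i)² ≤ (4/n) ∑_{i=1}^k (λ_{k+1} − λ_i) λ_i. Then Yang's second inequality holds: λ_{k+1} ≤ (1/k)(1 + 4/n) ∑_{i=1}^k λ_i. -/
/-!
Put `a = λ_{k+1}`, `S₁ = ∑ λ_i`, `S₂ = ∑ λ_i²` and `c = 4/n`. Yang's first inequality reads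
`k a² - (2 + c) a S₁ + (1 + c) S₂ ≤ 0`, and Cauchy–Schwarz `S₁² ≤ k S₂` turns `k` times it into
`(k a - S₁) (k a - (1 + c) S₁) ≤ 0`. Since `λ_i < λ_{k+1}` for `i ≤ k`, the first factor is
positive, so `k a ≤ (1 + c) S₁`, which is Yang's second inequality.
-/

open Finset

theorem sum_sub_sq_sub_mul_sum_sub_mul_eq {ι : Type*} (s : Finset ι) (f : ι → ℝ) (a c : ℝ) :
    ∑ i ∈ s, (a - f i) ^ 2 - c * ∑ i ∈ s, (a - f i) * f i =
      #s * a ^ 2 - (2 + c) * a * ∑ i ∈ s, f i + (1 + c) * ∑ i ∈ s, f i ^ 2 := by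
  simp only [sub_sq, sub_mul, sum_add_distrib, sum_sub_distrib, sum_const, nsmul_eq_mul,
    ← mul_sum, ← sq]
  ring

theorem card_mul_le_one_add_mul_sum_of_sum_sub_sq_le {ι : Type*} (s : Finset ι) (f : ι → ℝ)
    {a c : ℝ} (hc : 0 ≤ 1 + c) (hlt : ∑ i ∈ s, f i < #s * a)
    (h : ∑ i ∈ s, (a - f i) ^ 2 ≤ c * ∑ i ∈ s, (a - f i) * f i) :
    #s * a ≤ (1 + c) * ∑ i ∈ s, f i := by
  have hquad := sum_sub_sq_sub_mul_sum_sub_mul_eq s f a c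
  have hCS : (∑ i ∈ s, f i) ^ 2 ≤ #s * ∑ i ∈ s, f i ^ 2 := sq_sum_le_card_mul_sum_sq
  have hfactor : (#s * a - ∑ i ∈ s, f i) * (#s * a - (1 + c) * ∑ i ∈ s, f i) ≤ 0 := by
    nlinarith [mul_le_mul_of_nonneg_left hCS hc, Nat.cast_nonneg (α := ℝ) #s]
  by_contra! hgt
  nlinarith [mul_pos (sub_pos.2 hlt) (sub_pos.2 hgt)]

theorem sum_Icc_lt_mul_of_monotoneOn (k : ℕ) (hk : 1 ≤ k) (Λ : ℕ → ℝ)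
    (hmono : MonotoneOn Λ (Set.Icc 1 k)) (hlt : Λ k < Λ (k + 1)) :
    ∑ i ∈ Icc 1 k, Λ i < k * Λ (k + 1) := by
  have hne : (Icc 1 k).Nonempty := nonempty_Icc.2 hk
  calc ∑ i ∈ Icc 1 k, Λ i < ∑ _i ∈ Icc 1 k, Λ (k + 1) :=
        sum_lt_sum_of_nonempty hne fun i hi => (hmono (coe_Icc 1 k ▸ hi)
          (Set.right_mem_Icc.2 hk) (mem_Icc.1 hi).2).trans_lt hlt
    _ = k * Λ (k + 1) := by simp

theorem yang_first_implies_yang_second_general (n k : ℕ) (hk : 1 ≤ k)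
    (Λ : ℕ → ℝ)
    (hmono : ∀ i, 1 ≤ i → i < k → Λ i ≤ Λ (i + 1))
    (hlt : Λ k < Λ (k + 1))
    (hYang1 : ∑ i ∈ Icc 1 k, (Λ (k + 1) - Λ i) ^ 2 ≤
      (4 / (n : ℝ)) * ∑ i ∈ Icc 1 k, (Λ (k + 1) - Λ i) * Λ i) :
    Λ (k + 1) ≤ (1 / (k : ℝ)) * (1 + 4 / (n : ℝ)) * ∑ i ∈ Icc 1 k, Λ i := by
  have hmonoOn : MonotoneOn Λ (Set.Icc 1 k) :=
    monotoneOn_of_le_add_one Set.ordConnected_Icc fun i _ hi hi' =>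
      hmono i hi.1 (Nat.lt_of_succ_le hi'.2)
  have hsum := sum_Icc_lt_mul_of_monotoneOn k hk Λ hmonoOn hlt
  have hcard : (#(Icc 1 k) : ℝ) = k := by simp
  have hkey := card_mul_le_one_add_mul_sum_of_sum_sub_sq_le (Icc 1 k) Λ
    (by positivity) (hcard ▸ hsum) hYang1
  have hk0 : (0 : ℝ) < k := by exact_mod_cast hk
  rw [hcard] at hkey
  rw [mul_assoc, one_div, ← div_eq_inv_mul, le_div_iff₀ hk0, mul_comm]
  exact hkey

/-- Yang's first inequality implies Yang's second inequality. -/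
theorem yang_first_implies_yang_second (n k : ℕ) (hn : 1 ≤ n) (hk : 1 ≤ k)
    (Λ : ℕ → ℝ) (hpos : 0 < Λ 1)
    (hmono : ∀ i, 1 ≤ i → i < k → Λ i ≤ Λ (i + 1))
    (hlt : Λ k < Λ (k + 1))
    (hYang1 : ∑ i ∈ Icc 1 k, (Λ (k + 1) - Λ i) ^ 2 ≤
      (4 / (n : ℝ)) * ∑ i ∈ Icc 1 k, (Λ (k + 1) - Λ i) * Λ i) :
    Λ (k + 1) ≤ (1 / (k : ℝ)) * (1 + 4 / (n : ℝ)) * ∑ i ∈ Icc 1 k, Λ i :=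
  yang_first_implies_yang_second_general n k hk Λ hmono hlt hYang1
end

section
/- Let k ≥ 1, n ≥ 1 an integer, and let 0 < Λ_1 ≤ ⋯ ≤ Λ_k < Λ_{k+1} be real numbers satisfying the Cheng–Yang clamped-plate inequality Λ_{k+1} − (1/k)∑_{i=1}^k Λ_i ≤ (8(n+2)/n²)^{1/2} (1/k) ∑_{i=1}^k (Λ_i (Λ_{k+1} − Λ_i))^{1/2}. Then Λ_{k+1} ≤ (1 + 8(n+2)/n²) (1/k) ∑_{i=1}^k Λ_i. -/
/-!
Write `A` for the mean of `Λ_1, …, Λ_k` and `L = Λ_{k+1}`. Since `0 ≤ Λ_i ≤ L`, Cauchy–Schwarz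
bounds the mean of `√(Λ_i (L - Λ_i))` by `√A · √(L - A)`, so the Cheng–Yang inequality becomes
`L - A ≤ √(C A) · √(L - A)` with `C = 8(n+2)/n²`. Dividing by `√(L - A)` (when `L > A`)
gives `L - A ≤ C A`.
-/

open Finset

theorem monotoneOn_Icc_of_le_succ {α : Type*} [Preorder α] {f : ℕ → α} {a b : ℕ}
    (hf : ∀ n, a ≤ n → n < b → f n ≤ f (n + 1)) : MonotoneOn f (Set.Icc a b) := by
  intro i hi j hj hij
  induction j, hij using Nat.le_induction with
  | base => exact le_rfl
  | succ j hij ih =>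
    exact (ih ⟨hi.1.trans hij, (Nat.le_succ j).trans hj.2⟩).trans (hf j (hi.1.trans hij) hj.2)

namespace Real

theorem sum_sqrt_mul_le_sqrt_mul_sqrt {ι : Type*} (s : Finset ι) {f g : ι → ℝ}
    (hf : ∀ i ∈ s, 0 ≤ f i) (hg : ∀ i ∈ s, 0 ≤ g i) :
    ∑ i ∈ s, √(f i * g i) ≤ √(∑ i ∈ s, f i) * √(∑ i ∈ s, g i) :=
  calc ∑ i ∈ s, √(f i * g i) = ∑ i ∈ s, √(f i) * √(g i) :=
        sum_congr rfl fun i hi => sqrt_mul (hf i hi) _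
    _ ≤ √(∑ i ∈ s, √(f i) ^ 2) * √(∑ i ∈ s, √(g i) ^ 2) := sum_mul_le_sqrt_mul_sqrt _ _ _
    _ = √(∑ i ∈ s, f i) * √(∑ i ∈ s, g i) := by
        rw [sum_congr rfl fun i hi => sq_sqrt (hf i hi), sum_congr rfl fun i hi => sq_sqrt (hg i hi)]

theorem mul_sum_sqrt_mul_le_sqrt_mul_sqrt {ι : Type*} (s : Finset ι) {f g : ι → ℝ} {c : ℝ}
    (hc : 0 ≤ c) (hf : ∀ i ∈ s, 0 ≤ f i) (hg : ∀ i ∈ s, 0 ≤ g i) :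
    c * ∑ i ∈ s, √(f i * g i) ≤ √(c * ∑ i ∈ s, f i) * √(c * ∑ i ∈ s, g i) :=
  calc c * ∑ i ∈ s, √(f i * g i) ≤ (√c * √c) * (√(∑ i ∈ s, f i) * √(∑ i ∈ s, g i)) := by
        rw [mul_self_sqrt hc]
        exact mul_le_mul_of_nonneg_left (sum_sqrt_mul_le_sqrt_mul_sqrt s hf hg) hc
    _ = √(c * ∑ i ∈ s, f i) * √(c * ∑ i ∈ s, g i) := by
        rw [sqrt_mul hc, sqrt_mul hc]; ring

theorem le_of_le_sqrt_mul_sqrt {x b : ℝ} (hb : 0 ≤ b) (h : x ≤ √b * √x) : x ≤ b := by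
  rcases le_or_gt x 0 with hx | hx
  · exact hx.trans hb
  · have hsx : 0 < √x := sqrt_pos.2 hx
    have : √x ≤ √b := le_of_mul_le_mul_right (by rwa [mul_self_sqrt hx.le]) hsx
    exact (sqrt_le_sqrt_iff hb).1 this

end Real

theorem cheng_yang_implies_bound_general (n k : ℕ) (hk : 1 ≤ k)
    (Λ : ℕ → ℝ) (hpos : 0 < Λ 1)
    (hmono : ∀ i, 1 ≤ i → i < k → Λ i ≤ Λ (i + 1))
    (hlt : Λ k < Λ (k + 1))
    (hCY : Λ (k + 1) - (1 / (k : ℝ)) * ∑ i ∈ Icc 1 k, Λ i ≤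
      Real.sqrt (8 * ((n : ℝ) + 2) / (n : ℝ) ^ 2) * (1 / (k : ℝ)) *
        ∑ i ∈ Icc 1 k, Real.sqrt (Λ i * (Λ (k + 1) - Λ i))) :
    Λ (k + 1) ≤ (1 + 8 * ((n : ℝ) + 2) / (n : ℝ) ^ 2) * (1 / (k : ℝ)) *
      ∑ i ∈ Icc 1 k, Λ i := by
  have hmon := monotoneOn_Icc_of_le_succ hmono
  have hrange : ∀ i ∈ Icc 1 k, 0 ≤ Λ i ∧ Λ i ≤ Λ (k + 1) := fun i hi =>
    have hi' : i ∈ Set.Icc 1 k := by simpa using hi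
    ⟨hpos.le.trans (hmon ⟨le_rfl, hk⟩ hi' hi'.1),
      (hmon hi' ⟨hk, le_rfl⟩ hi'.2).trans hlt.le⟩
  have hC : 0 ≤ 8 * ((n : ℝ) + 2) / (n : ℝ) ^ 2 := by positivity
  set L := Λ (k + 1)
  set C := 8 * ((n : ℝ) + 2) / (n : ℝ) ^ 2
  set A := 1 / (k : ℝ) * ∑ i ∈ Icc 1 k, Λ i with hA
  have hmean : 0 ≤ A := mul_nonneg (by positivity) (sum_nonneg fun i hi => (hrange i hi).1)
  have hgap : 1 / (k : ℝ) * ∑ i ∈ Icc 1 k, (L - Λ i) = L - A := by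
    have : (k : ℝ) ≠ 0 := Nat.cast_ne_zero.2 (by omega)
    rw [sum_sub_distrib, sum_const, Nat.card_Icc, Nat.add_sub_cancel, nsmul_eq_mul, hA]
    field_simp
  have hCS : 1 / (k : ℝ) * ∑ i ∈ Icc 1 k, √(Λ i * (L - Λ i)) ≤ √A * √(L - A) :=
    hgap ▸ Real.mul_sum_sqrt_mul_le_sqrt_mul_sqrt _ (by positivity)
      (fun i hi => (hrange i hi).1) (fun i hi => sub_nonneg.2 (hrange i hi).2)
  have hquad : L - A ≤ √(C * A) * √(L - A) :=
    calc L - A ≤ √C * (1 / (k : ℝ) * ∑ i ∈ Icc 1 k, √(Λ i * (L - Λ i))) := by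
          rw [← mul_assoc]; exact hCY
      _ ≤ √C * (√A * √(L - A)) := by gcongr
      _ = √(C * A) * √(L - A) := by rw [Real.sqrt_mul hC, mul_assoc]
  have hexcess : L - A ≤ C * A := Real.le_of_le_sqrt_mul_sqrt (mul_nonneg hC hmean) hquad
  rw [mul_assoc]
  linarith

/-- The Cheng–Yang clamped-plate inequality implies the simpler bound
`Λ_{k+1} ≤ (1 + 8(n+2)/n²) (1/k) ∑ Λ_i`. -/
theorem cheng_yang_implies_bound (n k : ℕ) (hn : 1 ≤ n) (hk : 1 ≤ k)
    (Λ : ℕ → ℝ) (hpos : 0 < Λ 1)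
    (hmono : ∀ i, 1 ≤ i → i < k → Λ i ≤ Λ (i + 1))
    (hlt : Λ k < Λ (k + 1))
    (hCY : Λ (k + 1) - (1 / (k : ℝ)) * ∑ i ∈ Icc 1 k, Λ i ≤
      Real.sqrt (8 * ((n : ℝ) + 2) / (n : ℝ) ^ 2) * (1 / (k : ℝ)) *
        ∑ i ∈ Icc 1 k, Real.sqrt (Λ i * (Λ (k + 1) - Λ i))) :
    Λ (k + 1) ≤ (1 + 8 * ((n : ℝ) + 2) / (n : ℝ) ^ 2) * (1 / (k : ℝ)) *
      ∑ i ∈ Icc 1 k, Λ i :=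
  cheng_yang_implies_bound_general n k hk Λ hpos hmono hlt hCY
end
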